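/- arXiv:2204.06414 — 4 statements merged into one kernel-verified Lean document; each statement's English description precedes it below -/
import Mathlib

section
/- The value det(VW)/∏_{ℓ=1}^n (w_ℓ·δ) is invariant under: (1) replacing any column w_i of W by w_i + λ_i with λ_i ∈ ker(V), provided δ ∈ (ker V)^⊥; and (2) rescaling any column w_ℓ by a positive scalar ξ. Here V ∈ ℝ^{n×k}, W ∈ ℝ^{k×n}, δ ∈ ℝ^k with w_ℓ·δ ≠ 0 for all ℓ. -/
/-!
Changing the column `w_i` of `W` to `c` only changes column `i` of `VW`, to `V c`, and the
factor `w_i · δ` of the denominator, to `c · δ`. Adding `λ ∈ ker V` with `δ ⊥ λ` changes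
neither, and scaling by `ξ` multiplies both the determinant and the denominator by `ξ`.
-/

open Matrix

section SectorIntegral

variable {m n R : Type*} [Fintype m] [Fintype n] [DecidableEq n] [Field R]

/-- The paper's `I^tr_σ`; for the `ℓ`-th column `w_ℓ` of `W`, `w_ℓ · δ = (Wᵀ *ᵥ δ) ℓ`. -/
noncomputable def sectorIntegral (V : Matrix n m R) (W : Matrix m n R) (δ : m → R) : R :=
  (V * W).det / ∏ ℓ, (Wᵀ *ᵥ δ) ℓ

theorem sectorIntegral_updateCol (V : Matrix n m R) (W : Matrix m n R) (δ : m → R) (i : n)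
    (c : m → R) :
    sectorIntegral V (W.updateCol i c) δ =
      ((V * W).updateCol i (V *ᵥ c)).det /
        ((δ ⬝ᵥ c) * ∏ ℓ ∈ Finset.univ.erase i, (Wᵀ *ᵥ δ) ℓ) := by
  rw [sectorIntegral, mul_updateCol, mulVec_transpose, vecMul_updateCol,
    Finset.prod_update_of_mem (Finset.mem_univ i), Finset.sdiff_singleton_eq_erase,
    ← mulVec_transpose]

theorem sectorIntegral_updateCol_add_of_mulVec_eq_zero (V : Matrix n m R) (W : Matrix m n R)
    (δ : m → R) (i : n) {v : m → R} (hV : V *ᵥ v = 0) (hδ : δ ⬝ᵥ v = 0) :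
    sectorIntegral V (W.updateCol i (Wᵀ i + v)) δ = sectorIntegral V W δ := by
  conv_rhs => rw [← updateCol_eq_self W i]
  rw [sectorIntegral_updateCol, sectorIntegral_updateCol, mulVec_add, hV, add_zero,
    dotProduct_add, hδ, add_zero]
  rfl

theorem sectorIntegral_updateCol_smul (V : Matrix n m R) (W : Matrix m n R) (δ : m → R)
    (i : n) (c : m → R) {ξ : R} (hξ : ξ ≠ 0) :
    sectorIntegral V (W.updateCol i (ξ • c)) δ = sectorIntegral V (W.updateCol i c) δ := by
  rw [sectorIntegral_updateCol, sectorIntegral_updateCol, mulVec_smul, det_updateCol_smul,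
    dotProduct_smul, smul_eq_mul, mul_assoc, mul_div_mul_left _ _ hξ]

end SectorIntegral

theorem sector_integral_well_defined_general {n k : ℕ}
    (V : Matrix (Fin n) (Fin k) ℝ) (W : Matrix (Fin k) (Fin n) ℝ)
    (δ : Fin k → ℝ) :
    (∀ (i : Fin n) (lam : Fin k → ℝ), V.mulVec lam = 0 →
      (∀ μ : Fin k → ℝ, V.mulVec μ = 0 → δ ⬝ᵥ μ = 0) →
      (V * (W.updateCol i (fun r => W r i + lam r))).det /
        ∏ ℓ, (W.updateCol i (fun r => W r i + lam r))ᵀ.mulVec δ ℓ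
      = (V * W).det / ∏ ℓ, Wᵀ.mulVec δ ℓ) ∧
    (∀ (i : Fin n) (ξ : ℝ), 0 < ξ →
      (V * (W.updateCol i (fun r => ξ * W r i))).det /
        ∏ ℓ, (W.updateCol i (fun r => ξ * W r i))ᵀ.mulVec δ ℓ
      = (V * W).det / ∏ ℓ, Wᵀ.mulVec δ ℓ) :=
  ⟨fun i _ hlam hperp =>
    sectorIntegral_updateCol_add_of_mulVec_eq_zero V W δ i hlam (hperp _ hlam),
  fun i _ hξ => (sectorIntegral_updateCol_smul V W δ i (Wᵀ i) hξ.ne').trans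
    (congrArg (sectorIntegral V · δ) (updateCol_eq_self W i))⟩

/-- Well-definedness of the tropical sector integral formula
`det(VW)/∏_ℓ (w_ℓ·δ)`: it is invariant (1) under replacing a column `w_i`
of `W` by `w_i + λ` with `λ ∈ ker V`, provided `δ ⊥ ker V`, and
(2) under rescaling a column of `W` by a positive scalar `ξ`. -/
theorem sector_integral_well_defined {n k : ℕ}
    (V : Matrix (Fin n) (Fin k) ℝ) (W : Matrix (Fin k) (Fin n) ℝ)
    (δ : Fin k → ℝ) (hδ : ∀ ℓ, Wᵀ.mulVec δ ℓ ≠ 0) :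
    (∀ (i : Fin n) (lam : Fin k → ℝ), V.mulVec lam = 0 →
      (∀ μ : Fin k → ℝ, V.mulVec μ = 0 → δ ⬝ᵥ μ = 0) →
      (V * (W.updateCol i (fun r => W r i + lam r))).det /
        ∏ ℓ, (W.updateCol i (fun r => W r i + lam r))ᵀ.mulVec δ ℓ
      = (V * W).det / ∏ ℓ, Wᵀ.mulVec δ ℓ) ∧
    (∀ (i : Fin n) (ξ : ℝ), 0 < ξ →
      (V * (W.updateCol i (fun r => ξ * W r i))).det /
        ∏ ℓ, (W.updateCol i (fun r => ξ * W r i))ᵀ.mulVec δ ℓ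
      = (V * W).det / ∏ ℓ, Wᵀ.mulVec δ ℓ) :=
  sector_integral_well_defined_general V W δ
end

section
/- For the pentagon P ⊂ ℝ² defined by ℓ₁ = 1+y₁ ≥ 0, ℓ₂ = 1+y₁−y₂ ≥ 0, ℓ₃ = 1−y₁−y₂ ≥ 0, ℓ₄ = 1−y₁+y₂ ≥ 0, ℓ₅ = 1+y₂ ≥ 0, the identity ℓ₁ℓ₂ℓ₃ + ℓ₂ℓ₃ℓ₄ + ℓ₃ℓ₄ℓ₅ + 2ℓ₄ℓ₅ℓ₁ + 2ℓ₅ℓ₁ℓ₂ = 7 + 2(y₁+y₂) − (y₁−y₂)² holds as polynomials in y₁, y₂; in particular the adjoint A(y) = 7 + 2(y₁+y₂) − (y₁−y₂)² has degree 2, not 3. -/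
set_option linter.unnecessarySimpa false


/-- The adjoint of the pentagon (Example 5.5): with facet equations
`ℓ₁ = 1+y₁, ℓ₂ = 1+y₁−y₂, ℓ₃ = 1−y₁−y₂, ℓ₄ = 1−y₁+y₂, ℓ₅ = 1+y₂`,
one has `ℓ₁ℓ₂ℓ₃ + ℓ₂ℓ₃ℓ₄ + ℓ₃ℓ₄ℓ₅ + 2ℓ₄ℓ₅ℓ₁ + 2ℓ₅ℓ₁ℓ₂
= 7 + 2(y₁+y₂) − (y₁−y₂)²` identically; in particular the adjoint
`A = 7 + 2(y₁+y₂) − (y₁−y₂)²` has total degree 2, not 3. -/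
theorem pentagon_adjoint_identity :
    (∀ y₁ y₂ : ℝ,
      (1+y₁)*(1+y₁-y₂)*(1-y₁-y₂) + (1+y₁-y₂)*(1-y₁-y₂)*(1-y₁+y₂) +
      (1-y₁-y₂)*(1-y₁+y₂)*(1+y₂) + 2*(1-y₁+y₂)*(1+y₂)*(1+y₁) +
      2*(1+y₂)*(1+y₁)*(1+y₁-y₂)
      = 7 + 2*(y₁+y₂) - (y₁-y₂)^2) ∧
    ((7 + 2*(MvPolynomial.X 0 + MvPolynomial.X 1) -
        (MvPolynomial.X 0 - MvPolynomial.X 1)^2 :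
        MvPolynomial (Fin 2) ℝ).totalDegree = 2) := by
  constructor
  · intro y₁ y₂; ring
  · open MvPolynomial in
    have e1 : (X 0 * X 1 : MvPolynomial (Fin 2) ℝ)
        = monomial (Finsupp.single 0 1 + Finsupp.single 1 1) 1 := by
      simp [X, monomial_mul]
    have hne : (Finsupp.single (0:Fin 2) 1 + Finsupp.single (1:Fin 2) 1)
        ≠ Finsupp.single (0:Fin 2) 2 := by
      intro h; have := DFunLike.congr_fun h 1
      simp [Finsupp.add_apply, Finsupp.single_apply] at this
    have hp : (7 + 2*(X 0 + X 1) - (X 0 - X 1)^2 : MvPolynomial (Fin 2) ℝ)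
        = C 7 + C 2*X 0 + C 2*X 1 - X 0^2
          + C 2*(monomial (Finsupp.single 0 1 + Finsupp.single 1 1) 1) - X 1^2 := by
      rw [← e1]; simp only [map_ofNat]; ring
    have hcoeff : ((7 + 2*(X 0 + X 1) - (X 0 - X 1)^2 :
        MvPolynomial (Fin 2) ℝ)).coeff (Finsupp.single 0 2) = -1 := by
      rw [hp]
      simp [coeff_add, coeff_sub, coeff_X_pow, coeff_monomial, hne,
        Finsupp.single_eq_single_iff, coeff_X', coeff_C_mul, coeff_C, eq_comm,
        Finsupp.single_eq_zero]
    apply le_antisymm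
    · rw [hp]
      have hCX : ∀ (a : ℝ) (i : Fin 2), (C a * X i : MvPolynomial (Fin 2) ℝ).totalDegree ≤ 2 :=
        fun a i => (totalDegree_mul _ _).trans
          (by simpa [totalDegree_C] using (totalDegree_X i).le.trans one_le_two)
      refine (totalDegree_sub _ _).trans (max_le ?_ ?_)
      · refine (totalDegree_add _ _).trans (max_le ?_ ?_)
        · refine (totalDegree_sub _ _).trans (max_le ?_ ?_)
          · refine (totalDegree_add _ _).trans (max_le ?_ ?_)
            · refine (totalDegree_add _ _).trans (max_le ?_ ?_)
              · simp [totalDegree_C]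
              · exact hCX 2 0
            · exact hCX 2 1
          · simpa using (totalDegree_X_pow (R := ℝ) (0 : Fin 2) 2).le
        · refine (totalDegree_mul _ _).trans ?_
          simpa [totalDegree_C] using
            (totalDegree_monomial_le (Finsupp.single (0:Fin 2) 1 + Finsupp.single 1 1) (1:ℝ)).trans
              (by simp [Finsupp.sum_add_index, Finsupp.sum_single_index])
      · simpa using (totalDegree_X_pow (R := ℝ) (1 : Fin 2) 2).le
    · have hs := MvPolynomial.le_totalDegree (p := (7 + 2*(X 0 + X 1) - (X 0 - X 1)^2 :
          MvPolynomial (Fin 2) ℝ)) (s := Finsupp.single 0 2)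
          (mem_support_iff.2 (by rw [hcoeff]; norm_num))
      simpa using hs
end

section
/- With P and ℓ₁,…,ℓ₅ as above, A = Σ vertex terms, and barycentric coordinates p₄₅ = ℓ₁ℓ₂ℓ₃/A, p₅₁ = ℓ₂ℓ₃ℓ₄/A, p₁₂ = ℓ₃ℓ₄ℓ₅/A, p₂₃ = 2ℓ₄ℓ₅ℓ₁/A, p₃₄ = 2ℓ₅ℓ₁ℓ₂/A, one has for all y ∈ P°: (i) p₄₅+p₅₁+p₁₂+p₂₃+p₃₄ = 1, and (ii) p₄₅·(0,−1) + p₅₁·(−1,−1) + p₁₂·(−1,0) + p₂₃·(0,1) + p₃₄·(1,0) = (y₁,y₂). -/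
/-- Wachspress barycentric coordinates on the pentagon (Example 5.5): with
`ℓ₁ = 1+y₁, ℓ₂ = 1+y₁−y₂, ℓ₃ = 1−y₁−y₂, ℓ₄ = 1−y₁+y₂, ℓ₅ = 1+y₂` and
`A = ℓ₁ℓ₂ℓ₃ + ℓ₂ℓ₃ℓ₄ + ℓ₃ℓ₄ℓ₅ + 2ℓ₄ℓ₅ℓ₁ + 2ℓ₅ℓ₁ℓ₂`, the coordinates
`p₄₅ = ℓ₁ℓ₂ℓ₃/A, p₅₁ = ℓ₂ℓ₃ℓ₄/A, p₁₂ = ℓ₃ℓ₄ℓ₅/A, p₂₃ = 2ℓ₄ℓ₅ℓ₁/A,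
p₃₄ = 2ℓ₅ℓ₁ℓ₂/A` sum to `1` on the interior of the pentagon and express
`(y₁,y₂)` as the corresponding convex combination of the vertices
`(0,−1), (−1,−1), (−1,0), (0,1), (1,0)`. -/
theorem pentagon_wachspress_coordinates (y₁ y₂ : ℝ)
    (h₁ : 0 < 1 + y₁) (h₂ : 0 < 1 + y₁ - y₂) (h₃ : 0 < 1 - y₁ - y₂)
    (h₄ : 0 < 1 - y₁ + y₂) (h₅ : 0 < 1 + y₂) :
    let ℓ₁ := 1 + y₁
    let ℓ₂ := 1 + y₁ - y₂
    let ℓ₃ := 1 - y₁ - y₂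
    let ℓ₄ := 1 - y₁ + y₂
    let ℓ₅ := 1 + y₂
    let A := ℓ₁*ℓ₂*ℓ₃ + ℓ₂*ℓ₃*ℓ₄ + ℓ₃*ℓ₄*ℓ₅ + 2*ℓ₄*ℓ₅*ℓ₁ + 2*ℓ₅*ℓ₁*ℓ₂
    let p45 := ℓ₁*ℓ₂*ℓ₃ / A
    let p51 := ℓ₂*ℓ₃*ℓ₄ / A
    let p12 := ℓ₃*ℓ₄*ℓ₅ / A
    let p23 := 2*ℓ₄*ℓ₅*ℓ₁ / A
    let p34 := 2*ℓ₅*ℓ₁*ℓ₂ / A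
    p45 + p51 + p12 + p23 + p34 = 1 ∧
    p45 * 0 + p51 * (-1) + p12 * (-1) + p23 * 0 + p34 * 1 = y₁ ∧
    p45 * (-1) + p51 * (-1) + p12 * 0 + p23 * 1 + p34 * 0 = y₂ := by
  have hA : (1+y₁)*(1+y₁-y₂)*(1-y₁-y₂) + (1+y₁-y₂)*(1-y₁-y₂)*(1-y₁+y₂)
      + (1-y₁-y₂)*(1-y₁+y₂)*(1+y₂) + 2*(1-y₁+y₂)*(1+y₂)*(1+y₁)
      + 2*(1+y₂)*(1+y₁)*(1+y₁-y₂) ≠ 0 := by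
    have h24 : 0 < (1+y₁-y₂)*(1-y₁+y₂) := mul_pos h₂ h₄
    nlinarith [h24, h₁, h₅]
  show ((1+y₁)*(1+y₁-y₂)*(1-y₁-y₂) / ((1+y₁)*(1+y₁-y₂)*(1-y₁-y₂) + (1+y₁-y₂)*(1-y₁-y₂)*(1-y₁+y₂) + (1-y₁-y₂)*(1-y₁+y₂)*(1+y₂) + 2*(1-y₁+y₂)*(1+y₂)*(1+y₁) + 2*(1+y₂)*(1+y₁)*(1+y₁-y₂))
      + (1+y₁-y₂)*(1-y₁-y₂)*(1-y₁+y₂) / ((1+y₁)*(1+y₁-y₂)*(1-y₁-y₂) + (1+y₁-y₂)*(1-y₁-y₂)*(1-y₁+y₂) + (1-y₁-y₂)*(1-y₁+y₂)*(1+y₂) + 2*(1-y₁+y₂)*(1+y₂)*(1+y₁) + 2*(1+y₂)*(1+y₁)*(1+y₁-y₂))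
      + (1-y₁-y₂)*(1-y₁+y₂)*(1+y₂) / ((1+y₁)*(1+y₁-y₂)*(1-y₁-y₂) + (1+y₁-y₂)*(1-y₁-y₂)*(1-y₁+y₂) + (1-y₁-y₂)*(1-y₁+y₂)*(1+y₂) + 2*(1-y₁+y₂)*(1+y₂)*(1+y₁) + 2*(1+y₂)*(1+y₁)*(1+y₁-y₂))
      + 2*(1-y₁+y₂)*(1+y₂)*(1+y₁) / ((1+y₁)*(1+y₁-y₂)*(1-y₁-y₂) + (1+y₁-y₂)*(1-y₁-y₂)*(1-y₁+y₂) + (1-y₁-y₂)*(1-y₁+y₂)*(1+y₂) + 2*(1-y₁+y₂)*(1+y₂)*(1+y₁) + 2*(1+y₂)*(1+y₁)*(1+y₁-y₂))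
      + 2*(1+y₂)*(1+y₁)*(1+y₁-y₂) / ((1+y₁)*(1+y₁-y₂)*(1-y₁-y₂) + (1+y₁-y₂)*(1-y₁-y₂)*(1-y₁+y₂) + (1-y₁-y₂)*(1-y₁+y₂)*(1+y₂) + 2*(1-y₁+y₂)*(1+y₂)*(1+y₁) + 2*(1+y₂)*(1+y₁)*(1+y₁-y₂)) = 1) ∧
    ((1+y₁)*(1+y₁-y₂)*(1-y₁-y₂) / ((1+y₁)*(1+y₁-y₂)*(1-y₁-y₂) + (1+y₁-y₂)*(1-y₁-y₂)*(1-y₁+y₂) + (1-y₁-y₂)*(1-y₁+y₂)*(1+y₂) + 2*(1-y₁+y₂)*(1+y₂)*(1+y₁) + 2*(1+y₂)*(1+y₁)*(1+y₁-y₂)) * 0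
      + (1+y₁-y₂)*(1-y₁-y₂)*(1-y₁+y₂) / ((1+y₁)*(1+y₁-y₂)*(1-y₁-y₂) + (1+y₁-y₂)*(1-y₁-y₂)*(1-y₁+y₂) + (1-y₁-y₂)*(1-y₁+y₂)*(1+y₂) + 2*(1-y₁+y₂)*(1+y₂)*(1+y₁) + 2*(1+y₂)*(1+y₁)*(1+y₁-y₂)) * (-1)
      + (1-y₁-y₂)*(1-y₁+y₂)*(1+y₂) / ((1+y₁)*(1+y₁-y₂)*(1-y₁-y₂) + (1+y₁-y₂)*(1-y₁-y₂)*(1-y₁+y₂) + (1-y₁-y₂)*(1-y₁+y₂)*(1+y₂) + 2*(1-y₁+y₂)*(1+y₂)*(1+y₁) + 2*(1+y₂)*(1+y₁)*(1+y₁-y₂)) * (-1)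
      + 2*(1-y₁+y₂)*(1+y₂)*(1+y₁) / ((1+y₁)*(1+y₁-y₂)*(1-y₁-y₂) + (1+y₁-y₂)*(1-y₁-y₂)*(1-y₁+y₂) + (1-y₁-y₂)*(1-y₁+y₂)*(1+y₂) + 2*(1-y₁+y₂)*(1+y₂)*(1+y₁) + 2*(1+y₂)*(1+y₁)*(1+y₁-y₂)) * 0
      + 2*(1+y₂)*(1+y₁)*(1+y₁-y₂) / ((1+y₁)*(1+y₁-y₂)*(1-y₁-y₂) + (1+y₁-y₂)*(1-y₁-y₂)*(1-y₁+y₂) + (1-y₁-y₂)*(1-y₁+y₂)*(1+y₂) + 2*(1-y₁+y₂)*(1+y₂)*(1+y₁) + 2*(1+y₂)*(1+y₁)*(1+y₁-y₂)) * 1 = y₁) ∧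
    ((1+y₁)*(1+y₁-y₂)*(1-y₁-y₂) / ((1+y₁)*(1+y₁-y₂)*(1-y₁-y₂) + (1+y₁-y₂)*(1-y₁-y₂)*(1-y₁+y₂) + (1-y₁-y₂)*(1-y₁+y₂)*(1+y₂) + 2*(1-y₁+y₂)*(1+y₂)*(1+y₁) + 2*(1+y₂)*(1+y₁)*(1+y₁-y₂)) * (-1)
      + (1+y₁-y₂)*(1-y₁-y₂)*(1-y₁+y₂) / ((1+y₁)*(1+y₁-y₂)*(1-y₁-y₂) + (1+y₁-y₂)*(1-y₁-y₂)*(1-y₁+y₂) + (1-y₁-y₂)*(1-y₁+y₂)*(1+y₂) + 2*(1-y₁+y₂)*(1+y₂)*(1+y₁) + 2*(1+y₂)*(1+y₁)*(1+y₁-y₂)) * (-1)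
      + (1-y₁-y₂)*(1-y₁+y₂)*(1+y₂) / ((1+y₁)*(1+y₁-y₂)*(1-y₁-y₂) + (1+y₁-y₂)*(1-y₁-y₂)*(1-y₁+y₂) + (1-y₁-y₂)*(1-y₁+y₂)*(1+y₂) + 2*(1-y₁+y₂)*(1+y₂)*(1+y₁) + 2*(1+y₂)*(1+y₁)*(1+y₁-y₂)) * 0
      + 2*(1-y₁+y₂)*(1+y₂)*(1+y₁) / ((1+y₁)*(1+y₁-y₂)*(1-y₁-y₂) + (1+y₁-y₂)*(1-y₁-y₂)*(1-y₁+y₂) + (1-y₁-y₂)*(1-y₁+y₂)*(1+y₂) + 2*(1-y₁+y₂)*(1+y₂)*(1+y₁) + 2*(1+y₂)*(1+y₁)*(1+y₁-y₂)) * 1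
      + 2*(1+y₂)*(1+y₁)*(1+y₁-y₂) / ((1+y₁)*(1+y₁-y₂)*(1-y₁-y₂) + (1+y₁-y₂)*(1-y₁-y₂)*(1-y₁+y₂) + (1-y₁-y₂)*(1-y₁+y₂)*(1+y₂) + 2*(1-y₁+y₂)*(1+y₂)*(1+y₁) + 2*(1+y₂)*(1+y₁)*(1+y₁-y₂)) * 0 = y₂)
  refine ⟨?_, ?_, ?_⟩ <;> (field_simp; try ring)
end

section
/- Let f, g be Laurent polynomials in n variables with positive coefficients such that the Newton polytope of g is n-dimensional and contains the Newton polytope of f in its interior. Then the integral ∫_{ℝ^n_{>0}} (f(t)/g(t)) dt₁/t₁ ∧ ⋯ ∧ dt_n/t_n converges (is finite). -/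
/-! Splitting `f` into monomials reduces the claim to integrability of `t ^ a / g t` against
`∏ dtᵢ / tᵢ` for each exponent `a` interior to `N(g)`. If the sup-norm ball of radius `δ` about
`a` lies in `N(g)`, then for `x = log t` the point `a + δ • sign x` lies in `N(g)` too, and since
`y ↦ exp ⟪y, x⟫` is convex it is bounded on `N(g)` by its values at the exponents of `g`:
`t ^ a * exp (δ ∑ |log tᵢ|) ≤ ∑_b t ^ b ≤ (∑_b 1 / c_b) * g t`. So the integrand is dominated by
a constant times `∏ exp (-δ |log tᵢ|) / tᵢ`, a product of integrable functions of one variable. -/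

open MeasureTheory Real Set Finset

lemma integrableOn_exp_neg_mul_abs_log_mul_inv {δ : ℝ} (hδ : 0 < δ) :
    IntegrableOn (fun s : ℝ => exp (-δ * |log s|) * s⁻¹) (Ioi 0) := by
  rw [← Ioc_union_Ioi_eq_Ioi zero_le_one]
  refine IntegrableOn.union ?_ ?_
  · have hrpow : IntegrableOn (fun s : ℝ => s ^ (δ - 1)) (Ioc 0 1) := by
      simpa [intervalIntegrable_iff, uIoc_of_le zero_le_one] using
        intervalIntegral.intervalIntegrable_rpow' (r := δ - 1) (by linarith) (a := 0) (b := 1)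
    refine hrpow.congr_fun (fun s hs => ?_) measurableSet_Ioc
    dsimp only
    rw [abs_of_nonpos (log_nonpos hs.1.le hs.2), rpow_sub hs.1, rpow_one, rpow_def_of_pos hs.1]
    ring_nf
  · refine (integrableOn_Ioi_rpow_of_lt (by linarith : -δ - 1 < -1) zero_lt_one).congr_fun
      (fun s hs => ?_) measurableSet_Ioi
    have hs0 : 0 < s := zero_lt_one.trans hs
    dsimp only
    rw [abs_of_nonneg (log_nonneg (le_of_lt hs)), rpow_sub hs0, rpow_one, rpow_def_of_pos hs0]
    ring_nf

lemma integrableOn_univ_pi_fintype_prod {ι α : Type*} [Fintype ι] [MeasurableSpace α]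
    {μ : Measure α} [SigmaFinite μ] {f : ι → α → ℝ} {s : ι → Set α}
    (hf : ∀ i, IntegrableOn (f i) (s i) μ) :
    IntegrableOn (fun t : ι → α => ∏ i, f i (t i)) (univ.pi s) (Measure.pi fun _ => μ) := by
  rw [IntegrableOn, Measure.restrict_pi_pi]
  exact Integrable.fintype_prod_dep hf

lemma exp_le_sum_exp_of_mem_convexHull {E κ : Type*} [AddCommGroup E] [Module ℝ E]
    (ℓ : E →ₗ[ℝ] ℝ) (S : Finset κ) (v : κ → E) {c : E} (hc : c ∈ convexHull ℝ (v '' S)) :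
    exp (ℓ c) ≤ ∑ b ∈ S, exp (ℓ (v b)) := by
  obtain ⟨_, ⟨b, hb, rfl⟩, hle⟩ :=
    (convexOn_exp.comp_linearMap ℓ).exists_ge_of_mem_convexHull (fun _ _ => trivial) hc
  exact hle.trans (single_le_sum (f := fun b => exp (ℓ (v b))) (fun b _ => (exp_pos _).le) hb)

lemma exists_exp_add_mul_sum_abs_le_sum_exp {ι κ : Type*} [Fintype ι] (S : Finset κ)
    (v : κ → ι → ℝ) {p : ι → ℝ} (hp : p ∈ interior (convexHull ℝ (v '' S))) :
    ∃ δ > 0, ∀ x : ι → ℝ,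
      exp (∑ i, p i * x i + δ * ∑ i, |x i|) ≤ ∑ b ∈ S, exp (∑ i, v b i * x i) := by
  obtain ⟨ε, hε, hball⟩ := Metric.mem_nhds_iff.mp (mem_interior_iff_mem_nhds.mp hp)
  refine ⟨ε / 2, half_pos hε, fun x => ?_⟩
  set c : ι → ℝ := p + (ε / 2) • fun i => (SignType.sign (x i) : ℝ)
  have hc : c ∈ convexHull ℝ (v '' S) := by
    refine hball (Metric.mem_ball.mpr (lt_of_le_of_lt ?_ (half_lt_self hε)))
    refine (dist_pi_le_iff (half_pos hε).le).mpr fun i => ?_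
    have hsign : |(SignType.sign (x i) : ℝ)| ≤ 1 := by cases SignType.sign (x i) <;> simp
    simpa [c, abs_of_pos hε] using mul_le_mul_of_nonneg_left hsign (half_pos hε).le
  have hcx : ∑ i, c i * x i = ∑ i, p i * x i + ε / 2 * ∑ i, |x i| := by
    simp only [c, Pi.add_apply, Pi.smul_apply, smul_eq_mul, add_mul, sum_add_distrib, mul_sum,
      mul_assoc, sign_mul_self]
  simpa only [Fintype.linearCombination_apply, smul_eq_mul, hcx] using
    exp_le_sum_exp_of_mem_convexHull (Fintype.linearCombination ℝ x) S v hc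

lemma sum_le_sum_inv_mul_sum_mul {𝕜 κ : Type*} [Field 𝕜] [LinearOrder 𝕜] [IsStrictOrderedRing 𝕜]
    (S : Finset κ) {c u : κ → 𝕜} (hc : ∀ b ∈ S, 0 < c b) (hu : ∀ b ∈ S, 0 ≤ u b) :
    ∑ b ∈ S, u b ≤ (∑ b ∈ S, (c b)⁻¹) * ∑ b ∈ S, c b * u b := by
  rw [sum_mul]
  refine sum_le_sum fun b hb => ?_
  calc u b = (c b)⁻¹ * (c b * u b) := (inv_mul_cancel_left₀ (hc b hb).ne' _).symm
    _ ≤ (c b)⁻¹ * ∑ b ∈ S, c b * u b :=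
      mul_le_mul_of_nonneg_left
        (single_le_sum (fun b hb => mul_nonneg (hc b hb).le (hu b hb)) hb)
        (inv_nonneg.mpr (hc b hb).le)

lemma prod_zpow_eq_exp_sum_mul_log {ι : Type*} [Fintype ι] {t : ι → ℝ} (ht : ∀ i, 0 < t i)
    (b : ι → ℤ) : ∏ i, t i ^ b i = exp (∑ i, (b i : ℝ) * log (t i)) := by
  rw [exp_sum]
  refine prod_congr rfl fun i _ => ?_
  rw [← rpow_intCast, rpow_def_of_pos (ht i), mul_comm]

lemma prod_zpow_div_le {ι : Type*} [Fintype ι] (S : Finset (ι → ℤ)) {c : (ι → ℤ) → ℝ}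
    (hc : ∀ b ∈ S, 0 < c b) {a : ι → ℤ} {δ : ℝ}
    (hδ : ∀ x : ι → ℝ,
      exp (∑ i, (a i : ℝ) * x i + δ * ∑ i, |x i|) ≤ ∑ b ∈ S, exp (∑ i, (b i : ℝ) * x i))
    {t : ι → ℝ} (ht : ∀ i, 0 < t i) :
    (∏ i, t i ^ a i) / ∑ b ∈ S, c b * ∏ i, t i ^ b i ≤
      (∑ b ∈ S, (c b)⁻¹) * exp (-(δ * ∑ i, |log (t i)|)) := by
  have hmono : ∀ b : ι → ℤ, 0 ≤ ∏ i, t i ^ b i := fun b => prod_nonneg fun i _ => (zpow_pos (ht i) _).le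
  refine div_le_of_le_mul₀ (sum_nonneg fun b hb => mul_nonneg (hc b hb).le (hmono b))
    (mul_nonneg (sum_nonneg fun b hb => (inv_pos.mpr (hc b hb)).le) (exp_pos _).le) ?_
  have key := hδ fun i => log (t i)
  simp only [exp_add, ← prod_zpow_eq_exp_sum_mul_log ht] at key
  set E := δ * ∑ i, |log (t i)|
  calc ∏ i, t i ^ a i = (∏ i, t i ^ a i) * exp E * exp (-E) := by
        rw [mul_assoc, ← exp_add, add_neg_cancel, exp_zero, mul_one]
    _ ≤ (∑ b ∈ S, ∏ i, t i ^ b i) * exp (-E) := by gcongr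
    _ ≤ (∑ b ∈ S, (c b)⁻¹) * (∑ b ∈ S, c b * ∏ i, t i ^ b i) * exp (-E) := by
        gcongr
        exact sum_le_sum_inv_mul_sum_mul S hc fun b _ => hmono b
    _ = _ := by ring

lemma integrableOn_prod_zpow_div {ι : Type*} [Fintype ι] (S : Finset (ι → ℤ))
    {c : (ι → ℤ) → ℝ} (hc : ∀ b ∈ S, 0 < c b) {a : ι → ℤ}
    (ha : (fun i => (a i : ℝ)) ∈
      interior (convexHull ℝ ((fun b : ι → ℤ => fun i => (b i : ℝ)) '' S))) :
    IntegrableOn (fun t : ι → ℝ => (∏ i, t i ^ a i) / (∑ b ∈ S, c b * ∏ i, t i ^ b i) *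
      ∏ i, (t i)⁻¹) {t | ∀ i, 0 < t i} := by
  obtain ⟨δ, hδ, hexp⟩ := exists_exp_add_mul_sum_abs_le_sum_exp S _ ha
  have horthant : {t : ι → ℝ | ∀ i, 0 < t i} = Set.univ.pi fun _ => Ioi 0 := by ext; simp
  have hdom : IntegrableOn (fun t : ι → ℝ =>
      (∑ b ∈ S, (c b)⁻¹) * ∏ i, (exp (-δ * |log (t i)|) * (t i)⁻¹)) (Set.univ.pi fun _ => Ioi 0) :=
    (integrableOn_univ_pi_fintype_prod fun _ =>
      integrableOn_exp_neg_mul_abs_log_mul_inv hδ).const_mul _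
  rw [horthant]
  refine hdom.mono' (by fun_prop) ((ae_restrict_iff' (MeasurableSet.univ_pi fun _ =>
    measurableSet_Ioi)).mpr (ae_of_all _ fun t ht => ?_))
  replace ht : ∀ i, 0 < t i := by simpa using ht
  have hmono : ∀ b : ι → ℤ, 0 ≤ ∏ i, t i ^ b i := fun b =>
    prod_nonneg fun i _ => (zpow_pos (ht i) _).le
  have hinv : 0 ≤ ∏ i, (t i)⁻¹ := prod_nonneg fun i _ => inv_nonneg.mpr (ht i).le
  rw [norm_of_nonneg (mul_nonneg (div_nonneg (hmono a)
      (sum_nonneg fun b hb => mul_nonneg (hc b hb).le (hmono b))) hinv), prod_mul_distrib, ← exp_sum, ← mul_assoc]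
  refine mul_le_mul_of_nonneg_right ?_ hinv
  simpa only [neg_mul, sum_neg_distrib, mul_sum] using prod_zpow_div_le S hc hexp ht

theorem convergence_of_toric_integral_general {n : ℕ}
    (Sf Sg : Finset (Fin n → ℤ))
    (cf cg : (Fin n → ℤ) → ℝ)
    (hcg : ∀ a ∈ Sg, 0 < cg a)
    (hNewton : convexHull ℝ
        ((fun a : Fin n → ℤ => fun i => (a i : ℝ)) '' (Sf : Set (Fin n → ℤ)))
      ⊆ interior (convexHull ℝ
        ((fun a : Fin n → ℤ => fun i => (a i : ℝ)) '' (Sg : Set (Fin n → ℤ))))) :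
    IntegrableOn
      (fun t : Fin n → ℝ =>
        ((∑ a ∈ Sf, cf a * ∏ i, t i ^ (a i)) /
         (∑ a ∈ Sg, cg a * ∏ i, t i ^ (a i))) * ∏ i, (t i)⁻¹)
      {t : Fin n → ℝ | ∀ i, 0 < t i} volume := by
  have hsplit : ∀ t : Fin n → ℝ,
      (∑ a ∈ Sf, cf a * ∏ i, t i ^ a i) / (∑ b ∈ Sg, cg b * ∏ i, t i ^ b i) * ∏ i, (t i)⁻¹ =
        ∑ a ∈ Sf, cf a * ((∏ i, t i ^ a i) / (∑ b ∈ Sg, cg b * ∏ i, t i ^ b i) *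
          ∏ i, (t i)⁻¹) := fun t => by
    rw [sum_div, sum_mul]
    exact sum_congr rfl fun a _ => by ring
  simp_rw [hsplit]
  exact integrable_finsetSum _ fun a ha => (integrableOn_prod_zpow_div Sg hcg
    (hNewton (subset_convexHull ℝ _ (mem_image_of_mem _ ha)))).const_mul (cf a)

/-- Theorem 2.4 (dehomogenized): for Laurent polynomials `f, g` with positive
coefficients such that the Newton polytope of `g` contains that of `f` in its
interior (in particular `N(g)` is full-dimensional), the integral
`∫_{ℝ^n_{>0}} (f/g) dt₁/t₁ ∧ ⋯ ∧ dt_n/t_n` converges. -/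
theorem convergence_of_toric_integral {n : ℕ}
    (Sf Sg : Finset (Fin n → ℤ)) (hSf : Sf.Nonempty) (hSg : Sg.Nonempty)
    (cf cg : (Fin n → ℤ) → ℝ)
    (hcf : ∀ a ∈ Sf, 0 < cf a) (hcg : ∀ a ∈ Sg, 0 < cg a)
    (hNewton : convexHull ℝ
        ((fun a : Fin n → ℤ => fun i => (a i : ℝ)) '' (Sf : Set (Fin n → ℤ)))
      ⊆ interior (convexHull ℝ
        ((fun a : Fin n → ℤ => fun i => (a i : ℝ)) '' (Sg : Set (Fin n → ℤ))))) :
    IntegrableOn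
      (fun t : Fin n → ℝ =>
        ((∑ a ∈ Sf, cf a * ∏ i, t i ^ (a i)) /
         (∑ a ∈ Sg, cg a * ∏ i, t i ^ (a i))) * ∏ i, (t i)⁻¹)
      {t : Fin n → ℝ | ∀ i, 0 < t i} volume :=
  convergence_of_toric_integral_general Sf Sg cf cg hcg hNewton
end
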